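/- arXiv:1207.5197 — 3 statements merged into one kernel-verified Lean document; each statement's English description precedes it below -/
import Mathlib

section
/- For 0 < k < 1, the derivative of the complete elliptic integral of the first kind satisfies dK/dk = E(k)/(k(1-k²)) - K(k)/k, where E is the complete elliptic integral of the second kind. -/
/-!
Differentiating under the integral sign gives `K'(k) = k ∫ sin²θ / Δ^{3/2}` with
`Δ = 1 - k² sin²θ`. The function `sin θ cos θ / √Δ` vanishes at `0` and `π/2` and has derivative
`cos²θ / √Δ - (1 - k²) sin²θ / Δ^{3/2}`, so `(1 - k²) ∫ sin²θ / Δ^{3/2} = ∫ cos²θ / √Δ`. Finally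
`k² cos²θ = Δ - (1 - k²)` turns the last integral into `(E - (1 - k²) K) / k²`.
-/

open Real Set

/-- Complete elliptic integral of the first kind. -/
noncomputable def ellK (k : ℝ) : ℝ :=
  ∫ θ in (0:ℝ)..(π/2), 1 / Real.sqrt (1 - k^2 * Real.sin θ ^ 2)

/-- Complete elliptic integral of the second kind. -/
noncomputable def ellE (k : ℝ) : ℝ :=
  ∫ θ in (0:ℝ)..(π/2), Real.sqrt (1 - k^2 * Real.sin θ ^ 2)

open intervalIntegral

lemma one_sub_sq_mul_sin_sq_pos {k : ℝ} (hk : k ^ 2 < 1) (θ : ℝ) : 0 < 1 - k ^ 2 * sin θ ^ 2 := by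
  nlinarith [sin_sq_le_one θ, sq_nonneg k]

lemma sqrt_one_sub_sq_mul_sin_sq_pos {k : ℝ} (hk : k ^ 2 < 1) (θ : ℝ) :
    0 < √(1 - k ^ 2 * sin θ ^ 2) :=
  sqrt_pos.2 (one_sub_sq_mul_sin_sq_pos hk θ)

lemma hasDerivAt_one_div_sqrt_one_sub_sq_mul {x s : ℝ} (h : 0 < 1 - x ^ 2 * s) :
    HasDerivAt (fun y => 1 / √(1 - y ^ 2 * s)) (x * (s / √(1 - x ^ 2 * s) ^ 3)) x := by
  have hu : HasDerivAt (fun y => 1 - y ^ 2 * s) (-(2 * x * s)) x := by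
    simpa using ((hasDerivAt_pow 2 x).mul_const s).const_sub 1
  have hq0 : √(1 - x ^ 2 * s) ≠ 0 := (sqrt_pos.2 h).ne'
  refine ((hasDerivAt_const x (1 : ℝ)).fun_div (hu.sqrt h.ne') hq0).congr_deriv ?_
  have hq2 : √(1 - x ^ 2 * s) ^ 2 = 1 - x ^ 2 * s := sq_sqrt h.le
  field_simp
  rw [hq2]
  ring

lemma abs_mul_div_sqrt_one_sub_sq_mul_pow_three_le {x r s : ℝ} (hx : |x| ≤ r) (hr : r < 1)
    (hs₀ : 0 ≤ s) (hs₁ : s ≤ 1) :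
    |x * (s / √(1 - x ^ 2 * s) ^ 3)| ≤ 1 / √(1 - r ^ 2) ^ 3 := by
  have hx2 : x ^ 2 ≤ r ^ 2 := sq_le_sq' (abs_le.1 hx).1 (abs_le.1 hx).2
  have hr2 : 0 < √(1 - r ^ 2) := sqrt_pos.2 (by nlinarith [abs_nonneg x])
  have hden : √(1 - r ^ 2) ^ 3 ≤ √(1 - x ^ 2 * s) ^ 3 := by
    gcongr
    nlinarith [sq_nonneg x]
  rw [abs_mul, abs_of_nonneg (by positivity : 0 ≤ s / √(1 - x ^ 2 * s) ^ 3), ← one_mul (1 / _)]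
  exact mul_le_mul (by linarith) (div_le_div₀ zero_le_one hs₁ (by positivity) hden)
    (by positivity) zero_le_one

lemma hasDerivAt_ellK {k : ℝ} (hk : k ^ 2 < 1) :
    HasDerivAt ellK (k * ∫ θ in (0:ℝ)..(π/2), sin θ ^ 2 / √(1 - k ^ 2 * sin θ ^ 2) ^ 3) k := by
  have hk' : |k| < 1 := (sq_lt_one_iff_abs_lt_one k).1 hk
  have hball : Metric.ball k ((1 - |k|) / 2) ∈ nhds k := Metric.ball_mem_nhds k (by linarith)
  have habs : ∀ x ∈ Metric.ball k ((1 - |k|) / 2), |x| ≤ (1 + |k|) / 2 := fun x hx => by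
    rw [Metric.mem_ball, dist_eq_norm, norm_eq_abs] at hx
    linarith [abs_sub_abs_le_abs_sub x k]
  have hsq : ∀ x ∈ Metric.ball k ((1 - |k|) / 2), x ^ 2 < 1 := fun x hx =>
    (sq_lt_one_iff_abs_lt_one x).2 ((habs x hx).trans_lt (by linarith))
  have key := hasDerivAt_integral_of_dominated_loc_of_deriv_le (a := 0) (b := π / 2)
    (μ := MeasureTheory.volume) (F := fun x θ => 1 / √(1 - x ^ 2 * sin θ ^ 2))
    (F' := fun x θ => x * (sin θ ^ 2 / √(1 - x ^ 2 * sin θ ^ 2) ^ 3))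
    (bound := fun _ => 1 / √(1 - ((1 + |k|) / 2) ^ 2) ^ 3) hball
    (Filter.eventually_of_mem hball fun x hx => Continuous.aestronglyMeasurable <| by
      fun_prop (disch := exact fun θ => (sqrt_one_sub_sq_mul_sin_sq_pos (hsq x hx) θ).ne'))
    (Continuous.intervalIntegrable (by
      fun_prop (disch := exact fun θ => (sqrt_one_sub_sq_mul_sin_sq_pos hk θ).ne')) _ _)
    (Continuous.aestronglyMeasurable <| by
      fun_prop (disch := exact fun θ => pow_ne_zero _ (sqrt_one_sub_sq_mul_sin_sq_pos hk θ).ne'))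
    (MeasureTheory.ae_of_all _ fun θ _ x hx =>
      abs_mul_div_sqrt_one_sub_sq_mul_pow_three_le (habs x hx) (by linarith)
        (sq_nonneg _) (sin_sq_le_one θ))
    intervalIntegrable_const
    (MeasureTheory.ae_of_all _ fun θ _ x hx =>
      hasDerivAt_one_div_sqrt_one_sub_sq_mul (one_sub_sq_mul_sin_sq_pos (hsq x hx) θ))
  rw [← integral_const_mul]
  exact key.2

lemma hasDerivAt_sin_mul_cos_div_sqrt {k : ℝ} (hk : k ^ 2 < 1) (θ : ℝ) :
    HasDerivAt (fun θ => sin θ * cos θ / √(1 - k ^ 2 * sin θ ^ 2))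
      (cos θ ^ 2 / √(1 - k ^ 2 * sin θ ^ 2)
        - (1 - k ^ 2) * (sin θ ^ 2 / √(1 - k ^ 2 * sin θ ^ 2) ^ 3)) θ := by
  have hΔ := one_sub_sq_mul_sin_sq_pos hk θ
  have hq0 := (sqrt_pos.2 hΔ).ne'
  have hu : HasDerivAt (fun θ => 1 - k ^ 2 * sin θ ^ 2) (-(k ^ 2 * (2 * sin θ * cos θ))) θ := by
    simpa using (((hasDerivAt_sin θ).pow 2).const_mul (k ^ 2)).const_sub 1
  refine (((hasDerivAt_sin θ).fun_mul (hasDerivAt_cos θ)).fun_div (hu.sqrt hΔ.ne')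
    hq0).congr_deriv ?_
  have hq2 : √(1 - k ^ 2 * sin θ ^ 2) ^ 2 = 1 - k ^ 2 * sin θ ^ 2 := sq_sqrt hΔ.le
  generalize √(1 - k ^ 2 * sin θ ^ 2) = q at hq0 hq2 ⊢
  field_simp
  linear_combination (-sin θ ^ 2) * hq2 + k ^ 2 * sin θ ^ 2 * cos_sq' θ

lemma integral_cos_sq_div_sqrt {k : ℝ} (hk : k ^ 2 < 1) :
    ∫ θ in (0:ℝ)..(π/2), cos θ ^ 2 / √(1 - k ^ 2 * sin θ ^ 2)
      = (1 - k ^ 2) * ∫ θ in (0:ℝ)..(π/2), sin θ ^ 2 / √(1 - k ^ 2 * sin θ ^ 2) ^ 3 := by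
  have hq := sqrt_one_sub_sq_mul_sin_sq_pos hk
  have hA : Continuous fun θ => cos θ ^ 2 / √(1 - k ^ 2 * sin θ ^ 2) := by
    fun_prop (disch := exact fun θ => (hq θ).ne')
  have hB : Continuous fun θ => (1 - k ^ 2) * (sin θ ^ 2 / √(1 - k ^ 2 * sin θ ^ 2) ^ 3) := by
    fun_prop (disch := exact fun θ => pow_ne_zero _ (hq θ).ne')
  have hftc := integral_eq_sub_of_hasDerivAt (a := 0) (b := π / 2)
    (fun θ _ => hasDerivAt_sin_mul_cos_div_sqrt hk θ) ((hA.sub hB).intervalIntegrable _ _)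
  rw [integral_sub (hA.intervalIntegrable _ _) (hB.intervalIntegrable _ _)] at hftc
  simp only [cos_pi_div_two, sin_zero, zero_mul, mul_zero, zero_div, sub_zero,
    integral_const_mul] at hftc
  exact sub_eq_zero.1 hftc

lemma sq_mul_integral_cos_sq_div_sqrt {k : ℝ} (hk : k ^ 2 < 1) :
    k ^ 2 * ∫ θ in (0:ℝ)..(π/2), cos θ ^ 2 / √(1 - k ^ 2 * sin θ ^ 2)
      = ellE k - (1 - k ^ 2) * ellK k := by
  have hq := sqrt_one_sub_sq_mul_sin_sq_pos hk
  have hpt : ∀ θ, k ^ 2 * (cos θ ^ 2 / √(1 - k ^ 2 * sin θ ^ 2))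
      = √(1 - k ^ 2 * sin θ ^ 2) - (1 - k ^ 2) * (1 / √(1 - k ^ 2 * sin θ ^ 2)) := fun θ => by
    have hq0 := (hq θ).ne'
    have hq2 : √(1 - k ^ 2 * sin θ ^ 2) ^ 2 = 1 - k ^ 2 * sin θ ^ 2 :=
      sq_sqrt (one_sub_sq_mul_sin_sq_pos hk θ).le
    field_simp
    linear_combination k ^ 2 * cos_sq' θ - hq2
  rw [← integral_const_mul, integral_congr fun θ _ => hpt θ, integral_sub, integral_const_mul]
  · rfl
  · exact Continuous.intervalIntegrable (by fun_prop) _ _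
  · exact Continuous.intervalIntegrable
      (by fun_prop (disch := exact fun θ => (hq θ).ne')) _ _

theorem deriv_ellK (k : ℝ) (hk : k ∈ Ioo (0:ℝ) 1) :
    deriv ellK k = ellE k / (k * (1 - k^2)) - ellK k / k := by
  obtain ⟨hk0, hk1⟩ := hk
  have hk2 : k ^ 2 < 1 := by nlinarith
  have hE := sq_mul_integral_cos_sq_div_sqrt hk2
  rw [integral_cos_sq_div_sqrt hk2] at hE
  rw [(hasDerivAt_ellK hk2).deriv]
  have hk2' : 1 - k ^ 2 ≠ 0 := by linarith
  field_simp
  linear_combination hE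
end

section
/- If D(k) = U(k)·V(k) where V satisfies V'(k)/V(k) = (k²+2k-1)/(2k(1-k²)), and D satisfies k(1-k)(1+k)²D'' + (1-2k-k²)(1+k)D' + (k-1)D = 0 on (0,1), then U satisfies the Q-form equation U''(k) + ((1+k²)²/(4k²(1-k²)²))·U(k) = 0. -/
/-!
Writing `V' = g V`, the product rule gives `D' = (U' + g U) V` and
`D'' = (U'' + 2 g U' + (g² + g') U) V`. The prescribed `g` is exactly the one for which the
first-order terms cancel (`2 a g + b = 0` for the Picard–Fuchs operator
`a D'' + b D' + c D`), so dividing by `a V` leaves the normal form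
`U'' + (g² + g' + (b g + c) / a) U = 0`, whose potential simplifies to
`(1 + k²)² / (4 k² (1 - k²)²)`.
-/

open Set Filter Topology

section LiouvilleNormalForm

variable {𝕜 : Type*} [NontriviallyNormedField 𝕜] {U V g : 𝕜 → 𝕜} {x g' : 𝕜}

theorem deriv_deriv_mul (hU : ∀ᶠ y in 𝓝 x, DifferentiableAt 𝕜 U y)
    (hV : ∀ᶠ y in 𝓝 x, DifferentiableAt 𝕜 V y)
    (hU' : DifferentiableAt 𝕜 (deriv U) x) (hV' : DifferentiableAt 𝕜 (deriv V) x) :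
    deriv (deriv fun y => U y * V y) x
      = deriv (deriv U) x * V x + 2 * deriv U x * deriv V x + U x * deriv (deriv V) x := by
  have hprod : deriv (fun y => U y * V y) =ᶠ[𝓝 x]
      fun y => deriv U y * V y + U y * deriv V y := by
    filter_upwards [hU, hV] with y hUy hVy using deriv_mul hUy hVy
  rw [hprod.deriv_eq, ((hU'.hasDerivAt.fun_mul hV.self_of_nhds.hasDerivAt).fun_add
    (hU.self_of_nhds.hasDerivAt.fun_mul hV'.hasDerivAt)).deriv]
  ring

theorem deriv_deriv_of_deriv_eq_mul (hVg : deriv V =ᶠ[𝓝 x] fun y => V y * g y)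
    (hV : DifferentiableAt 𝕜 V x) (hg : HasDerivAt g g' x) :
    deriv (deriv V) x = V x * (g x ^ 2 + g') := by
  rw [hVg.deriv_eq, (hV.hasDerivAt.fun_mul hg).deriv, hVg.eq_of_nhds]
  ring

theorem deriv_deriv_add_mul_eq_zero_of_liouville {a b c : 𝕜} (ha : a ≠ 0) (hVx : V x ≠ 0)
    (hU : ∀ᶠ y in 𝓝 x, DifferentiableAt 𝕜 U y) (hV : ∀ᶠ y in 𝓝 x, DifferentiableAt 𝕜 V y)
    (hU' : DifferentiableAt 𝕜 (deriv U) x) (hV' : DifferentiableAt 𝕜 (deriv V) x)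
    (hVg : deriv V =ᶠ[𝓝 x] fun y => V y * g y) (hg : HasDerivAt g g' x)
    (hcancel : 2 * a * g x + b = 0)
    (hD : a * deriv (deriv fun y => U y * V y) x + b * deriv (fun y => U y * V y) x
      + c * (U x * V x) = 0) :
    deriv (deriv U) x + (g x ^ 2 + g' + (b * g x + c) / a) * U x = 0 := by
  rw [deriv_deriv_mul hU hV hU' hV', deriv_fun_mul hU.self_of_nhds hV.self_of_nhds,
    deriv_deriv_of_deriv_eq_mul hVg hV.self_of_nhds hg, hVg.eq_of_nhds] at hD
  have hb : b = -(2 * a * g x) := by linear_combination hcancel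
  subst hb
  linear_combination (norm := (field_simp; ring)) hD / (a * V x)

end LiouvilleNormalForm

theorem hasDerivAt_density_logDeriv {k : ℝ} (hk : k ∈ Ioo (0 : ℝ) 1) :
    HasDerivAt (fun x : ℝ => (x ^ 2 + 2 * x - 1) / (2 * x * (1 - x ^ 2)))
      ((k ^ 4 + 4 * k ^ 3 - 2 * k ^ 2 + 1) / (2 * k ^ 2 * (1 - k ^ 2) ^ 2)) k := by
  obtain ⟨hk0, hk1⟩ := hk
  have hden : 2 * k * (1 - k ^ 2) ≠ 0 := by
    have : 0 < 1 - k ^ 2 := by nlinarith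
    positivity
  refine (((((hasDerivAt_pow 2 k).fun_add ((hasDerivAt_id k).const_mul 2)).sub_const 1).fun_div
    (((hasDerivAt_id k).const_mul 2).fun_mul ((hasDerivAt_pow 2 k).const_sub 1)) hden)).congr_deriv ?_
  simp only [id, Nat.cast_ofNat]
  field_simp
  ring

theorem Q_form_reduction (D U V : ℝ → ℝ)
    (hU1 : ∀ k ∈ Ioo (0:ℝ) 1, DifferentiableAt ℝ U k)
    (hU2 : ∀ k ∈ Ioo (0:ℝ) 1, DifferentiableAt ℝ (deriv U) k)
    (hV1 : ∀ k ∈ Ioo (0:ℝ) 1, DifferentiableAt ℝ V k)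
    (hV2 : ∀ k ∈ Ioo (0:ℝ) 1, DifferentiableAt ℝ (deriv V) k)
    (hVne : ∀ k ∈ Ioo (0:ℝ) 1, V k ≠ 0)
    (hDUV : ∀ k, D k = U k * V k)
    (hVode : ∀ k ∈ Ioo (0:ℝ) 1,
      deriv V k = V k * (k^2 + 2*k - 1) / (2 * k * (1 - k^2)))
    (hDode : ∀ k ∈ Ioo (0:ℝ) 1,
      k * (1 - k) * (1 + k)^2 * deriv (deriv D) k
        + (1 - 2*k - k^2) * (1 + k) * deriv D k + (k - 1) * D k = 0) :
    ∀ k ∈ Ioo (0:ℝ) 1,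
      deriv (deriv U) k + (1 + k^2)^2 / (4 * k^2 * (1 - k^2)^2) * U k = 0 := by
  intro k hk
  obtain rfl : D = fun k => U k * V k := funext hDUV
  have hnhds : Ioo (0 : ℝ) 1 ∈ 𝓝 k := isOpen_Ioo.mem_nhds hk
  have ⟨hk0, hk1⟩ := hk
  have hk2 : 0 < 1 - k ^ 2 := by nlinarith
  have hVg : deriv V =ᶠ[𝓝 k] fun y => V y * ((y ^ 2 + 2 * y - 1) / (2 * y * (1 - y ^ 2))) :=
    eventually_of_mem hnhds fun y hy => (hVode y hy).trans (mul_div_assoc ..)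
  have hnormal := deriv_deriv_add_mul_eq_zero_of_liouville (by positivity) (hVne k hk)
    (eventually_of_mem hnhds hU1) (eventually_of_mem hnhds hV1) (hU2 k hk) (hV2 k hk) hVg
    (hasDerivAt_density_logDeriv hk) ?_ (hDode k hk)
  · convert hnormal using 3
    field_simp
    ring
  · field_simp
    ring
end

section
/- The formal power series D₁(k) = Σ_{n≥0} d_n k^n with d_{2n} = d_{2n+1} = ((2n)!/(2^{2n}(n!)²))² is a formal solution of k(1-k)(1+k)²D'' + (1-2k-k²)(1+k)D' + (k-1)D = 0, i.e., the coefficient recursion from the ODE is satisfied by these d_n. -/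
/-!
Write `θ = X d/dX`. Since `d_{2n} = d_{2n+1}`, the series factors as `D₁ = (1 + X) E` with
`E = ∑ₙ cₙ X^{2n} = (2/π) K(X)`, `cₙ = (binom(2n, n) / 4ⁿ)²`, where `K` is the complete elliptic
integral of the first kind. The Picard–Fuchs operator applied to `(1 + X) E` is `(1 + X)²` times
Legendre's operator applied to `E`, and `X` times Legendre's operator is `θ² - X² (θ + 1)²`,
which kills `E` because of the recursion `(2n + 2)² cₙ₊₁ = (2n + 1)² cₙ`.
-/

open PowerSeries

/-- The coefficients `d_{2n} = d_{2n+1} = ((2n)!/(2^{2n}(n!)²))²`. -/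
noncomputable def dCoeff (n : ℕ) : ℚ :=
  ((Nat.factorial (2 * (n / 2)) : ℚ) /
    (2 ^ (2 * (n / 2)) * (Nat.factorial (n / 2) : ℚ)^2))^2

namespace PowerSeries

variable {R : Type*}

theorem coeff_X_mul_derivative [CommSemiring R] (f : R⟦X⟧) (n : ℕ) :
    coeff n (X * d⁄dX R f) = n * coeff n f := by
  cases n with
  | zero => simp
  | succ n => rw [coeff_succ_X_mul, coeff_derivative, mul_comm]; push_cast; rfl

variable [CommRing R]

/-- Legendre's form `k (1 - k²) K'' + (1 - 3k²) K' - k K` of the differential operator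
annihilating the complete elliptic integral `K(k)`. -/
noncomputable def ellipticKOp (f : R⟦X⟧) : R⟦X⟧ :=
  X * (1 - X ^ 2) * d⁄dX R (d⁄dX R f) + (1 - 3 * X ^ 2) * d⁄dX R f - X * f

theorem X_mul_ellipticKOp (f : R⟦X⟧) :
    X * ellipticKOp f =
      X * d⁄dX R (X * d⁄dX R f) - X ^ 2 * (X * d⁄dX R (f + X * d⁄dX R f) + (f + X * d⁄dX R f)) := by
  simp only [ellipticKOp, Derivation.leibniz, map_add, derivative_X, smul_eq_mul]
  ring

theorem ellipticKOp_eq_zero_of_coeff {f : R⟦X⟧} (h1 : coeff 1 f = 0)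
    (hrec : ∀ m : ℕ, ((m : R) + 2) ^ 2 * coeff (m + 2) f = ((m : R) + 1) ^ 2 * coeff m f) :
    ellipticKOp f = 0 := by
  refine X_mul_cancel ?_
  rw [X_mul_ellipticKOp, mul_zero]
  ext n
  rcases n with _ | _ | m
  · simp
  · simp only [map_sub, map_add, coeff_X_pow_mul', coeff_X_mul_derivative, h1]
    simp
  · simp only [map_sub, map_add, mul_add, coeff_X_pow_mul', coeff_X_mul_derivative,
      map_zero]
    push_cast
    linear_combination hrec m

theorem picardFuchs_one_add_X_mul (E : R⟦X⟧) :
    X * (1 - X) * (1 + X) ^ 2 * d⁄dX R (d⁄dX R ((1 + X) * E))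
        + (1 - 2 * X - X ^ 2) * (1 + X) * d⁄dX R ((1 + X) * E) + (X - 1) * ((1 + X) * E) =
      (1 + X) ^ 2 * ellipticKOp E := by
  simp only [ellipticKOp, Derivation.leibniz, map_add, Derivation.map_one_eq_zero, map_zero,
    derivative_X, smul_eq_mul]
  ring

end PowerSeries

open Nat

noncomputable def ellipticKCoeff (k : ℕ) : ℚ := ((centralBinom k : ℚ) / 4 ^ k) ^ 2

theorem sq_mul_ellipticKCoeff_succ (k : ℕ) :
    (2 * (k : ℚ) + 2) ^ 2 * ellipticKCoeff (k + 1) = (2 * k + 1) ^ 2 * ellipticKCoeff k := by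
  have hcb : ((k : ℚ) + 1) * centralBinom (k + 1) = 2 * (2 * k + 1) * centralBinom k := by
    exact_mod_cast succ_mul_centralBinom_succ k
  have hstep : (2 * (k : ℚ) + 2) * (centralBinom (k + 1) / 4 ^ (k + 1)) =
      (2 * k + 1) * (centralBinom k / 4 ^ k) := by
    rw [pow_succ]; field_simp; linear_combination 2 * hcb
  simp only [ellipticKCoeff, ← mul_pow, hstep]

theorem dCoeff_eq_ellipticKCoeff (n : ℕ) : dCoeff n = ellipticKCoeff (n / 2) := by
  have hcb (m : ℕ) : (centralBinom m : ℚ) = (2 * m)! / m ! ^ 2 := by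
    rw [centralBinom_eq_two_mul_choose, Nat.cast_choose ℚ (by omega), two_mul,
      Nat.add_sub_cancel, sq]
  simp only [dCoeff, ellipticKCoeff, hcb, pow_mul]
  ring

noncomputable def ellipticKSeries : ℚ⟦X⟧ :=
  mk fun n => if Even n then ellipticKCoeff (n / 2) else 0

theorem mk_dCoeff_eq : mk dCoeff = (1 + X) * ellipticKSeries := by
  ext n
  rw [add_mul, one_mul, map_add]
  rcases n with _ | m
  · simp [ellipticKSeries, dCoeff_eq_ellipticKCoeff]
  · rw [coeff_succ_X_mul]
    obtain ⟨k, rfl | rfl⟩ := Nat.even_or_odd' m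
    · simp [ellipticKSeries, dCoeff_eq_ellipticKCoeff, parity_simps,
        show (2 * k + 1) / 2 = k by omega]
    · simp [ellipticKSeries, dCoeff_eq_ellipticKCoeff, parity_simps]

theorem ellipticKOp_ellipticKSeries : ellipticKOp ellipticKSeries = 0 := by
  refine ellipticKOp_eq_zero_of_coeff (by simp [ellipticKSeries]) fun m => ?_
  obtain ⟨k, rfl | rfl⟩ := Nat.even_or_odd' m
  · simpa [ellipticKSeries, parity_simps] using sq_mul_ellipticKCoeff_succ k
  · simp [ellipticKSeries, parity_simps]

theorem formal_solution_picard_fuchs :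
    (X * (1 - X) * (1 + X)^2 : PowerSeries ℚ) *
        derivativeFun (derivativeFun (PowerSeries.mk dCoeff))
      + (1 - 2 * X - X^2) * (1 + X) * derivativeFun (PowerSeries.mk dCoeff)
      + (X - 1) * PowerSeries.mk dCoeff = 0 := by
  rw [mk_dCoeff_eq]
  exact (picardFuchs_one_add_X_mul _).trans (by rw [ellipticKOp_ellipticKSeries, mul_zero])
end
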